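/- Let (S,h) be an admissible 4-polarized lattice and Γ ⊆ root₁(S,h) a set with no separating roots, and let c₁,c₂,c₃ ∈ Γ be a triangle. Then for each i ∈ {1,2,3}, every connected component of sec_i, regarded as a simple graph in which distinct u,v are adjacent iff ⟨u,v⟩ = 1, is isomorphic to a single vertex, a single edge, a path on three vertices, or a 3-cycle (i.e., sec_i is a triangular set: all its components are of Dynkin types A₁, A₂, A₃ or affine type Ã₂). -/

import Mathlib

/-!
Common definitions: 4-polarized lattices, lines, roots, Fano graphs
(following Degtyarev–Rams, "Counting lines with Vinberg's algorithm").
-/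

namespace K3

variable {S : Type*} [AddCommGroup S] [Module ℤ S]

/-- `root₁(S,h)`: the *lines* of a 4-polarized lattice. -/
def root1 (B : S →ₗ[ℤ] S →ₗ[ℤ] ℤ) (h : S) : Set S :=
  {l : S | B l l = -2 ∧ B l h = 1}

/-- `root₀(S,h)`: the *roots* of a 4-polarized lattice. -/
def root0 (B : S →ₗ[ℤ] S →ₗ[ℤ] ℤ) (h : S) : Set S :=
  {r : S | B r r = -2 ∧ B r h = 0}

/-- `(S,B,h)` is a 4-polarized lattice: `S` is a finitely generated free ℤ-module, `B`
a symmetric bilinear form, `⟨h,h⟩ = 4`, and `⟨v,v⟩ < 0` for nonzero `v ⊥ h`. -/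
structure IsPolarized (B : S →ₗ[ℤ] S →ₗ[ℤ] ℤ) (h : S) : Prop where
  free : Module.Free ℤ S
  finite : Module.Finite ℤ S
  symm : ∀ u v : S, B u v = B v u
  deg : B h h = 4
  hyperbolic : ∀ v : S, v ≠ 0 → B v h = 0 → B v v < 0

/-- Admissibility: there is no `u` with `⟨u,u⟩ = 0` and `⟨u,h⟩ = 2`. -/
def IsAdmissible (B : S →ₗ[ℤ] S →ₗ[ℤ] ℤ) (h : S) : Prop :=
  ¬ ∃ u : S, B u u = 0 ∧ B u h = 2

/-- The E₈ Cartan matrix (Bourbaki numbering of the Dynkin diagram). -/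
def e8Cartan : Matrix (Fin 8) (Fin 8) ℤ :=
  !![2,0,-1,0,0,0,0,0;
     0,2,0,-1,0,0,0,0;
     -1,0,2,-1,0,0,0,0;
     0,-1,-1,2,-1,0,0,0;
     0,0,0,-1,2,-1,0,0;
     0,0,0,0,-1,2,-1,0;
     0,0,0,0,0,-1,2,-1;
     0,0,0,0,0,0,-1,2]

/-- The Gram matrix of `L := E₈ ⊕ E₈ ⊕ U ⊕ U ⊕ U`, where `E₈` is *negative* definite
(Gram matrix the negative of the E₈ Cartan matrix) and `U` has Gram matrix `[[0,1],[1,0]]`. -/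
def LGram : Matrix (Fin 22) (Fin 22) ℤ := fun i j =>
  if hi : (i : ℕ) < 8 then
    (if hj : (j : ℕ) < 8 then -e8Cartan ⟨i, hi⟩ ⟨j, hj⟩ else 0)
  else if hi' : (i : ℕ) < 16 then
    (if hj' : 8 ≤ (j : ℕ) ∧ (j : ℕ) < 16 then
      -e8Cartan ⟨(i : ℕ) - 8, by omega⟩ ⟨(j : ℕ) - 8, by omega⟩ else 0)
  else
    (if 16 ≤ (j : ℕ) ∧ (i : ℕ) / 2 = (j : ℕ) / 2 ∧ i ≠ j then 1 else 0)

/-- A geometric 4-polarized lattice: admissible, even, and admitting a primitive isometric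
embedding into `L = 2E₈ ⊕ 3U` (primitive = the quotient by the image is torsion-free). -/
structure IsGeometric (B : S →ₗ[ℤ] S →ₗ[ℤ] ℤ) (h : S) extends IsPolarized B h : Prop where
  admissible : IsAdmissible B h
  even : ∀ v : S, Even (B v v)
  embeds : ∃ f : S →ₗ[ℤ] (Fin 22 → ℤ), Function.Injective f ∧
    (∀ u v : S, B u v = ∑ i, ∑ j, f u i * LGram i j * f v j) ∧
    (∀ (x : Fin 22 → ℤ) (n : ℤ), n ≠ 0 → n • x ∈ LinearMap.range f →
      x ∈ LinearMap.range f)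

/-- A ℤ-linear functional is *Weyl-generic* if it does not vanish on any root. -/
def WeylGeneric (B : S →ₗ[ℤ] S →ₗ[ℤ] ℤ) (h : S) (φ : S →ₗ[ℤ] ℤ) : Prop :=
  ∀ r ∈ root0 B h, φ r ≠ 0

/-- The vertex set of the Fano graph `Fn_φ(S,h)`. -/
def fanoVerts (B : S →ₗ[ℤ] S →ₗ[ℤ] ℤ) (h : S) (φ : S →ₗ[ℤ] ℤ) : Set S :=
  {l ∈ root1 B h | ∀ r ∈ root0 B h, 0 < φ r → 0 ≤ B l r}

/-- The set `Γ` together with `h` spans `S ⊗ ℚ`; since `S` is free, this is equivalent to: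
every `s : S` has a nonzero integer multiple in the ℤ-span of `Γ ∪ {h}`. -/
def QSpannedByLines (Γ : Set S) (h : S) : Prop :=
  ∀ s : S, ∃ n : ℤ, n ≠ 0 ∧ n • s ∈ Submodule.span ℤ (Γ ∪ {h})

/-- The Fano graph as a simple graph on `Γ`: distinct `u, v` adjacent iff `⟨u,v⟩ = 1`. -/
def fanoGraph (B : S →ₗ[ℤ] S →ₗ[ℤ] ℤ) (Γ : Set S) : SimpleGraph Γ where
  Adj u v := u ≠ v ∧ B u.1 v.1 = 1 ∧ B v.1 u.1 = 1
  symm := by refine ⟨?_⟩; intro u v hadj; exact ⟨hadj.1.symm, hadj.2.2, hadj.2.1⟩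
  loopless := by refine ⟨?_⟩; intro u hadj; exact hadj.1 rfl

/-- `Γ` has no separating roots: no root is positive on one element of `Γ` and negative
on another. -/
def NoSeparatingRoots (B : S →ₗ[ℤ] S →ₗ[ℤ] ℤ) (h : S) (Γ : Set S) : Prop :=
  ¬ ∃ r ∈ root0 B h, ∃ u ∈ Γ, ∃ v ∈ Γ, 0 < B r u ∧ B r v < 0

/-- A triangle in a set `Γ` of lines: three distinct elements pairwise of product `1`. -/
def IsTriangle (B : S →ₗ[ℤ] S →ₗ[ℤ] ℤ) (Γ : Set S) (c₁ c₂ c₃ : S) : Prop :=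
  c₁ ∈ Γ ∧ c₂ ∈ Γ ∧ c₃ ∈ Γ ∧ c₁ ≠ c₂ ∧ c₁ ≠ c₃ ∧ c₂ ≠ c₃ ∧
    B c₁ c₂ = 1 ∧ B c₁ c₃ = 1 ∧ B c₂ c₃ = 1

/-- Simple sections through `a` of the triangle `(a,b,c)`:
`sec a := {l ∈ Γ : ⟨l,a⟩ = 1, ⟨l,b⟩ = ⟨l,c⟩ = 0}`. -/
def sec (B : S →ₗ[ℤ] S →ₗ[ℤ] ℤ) (Γ : Set S) (a b c : S) : Set S :=
  {l ∈ Γ | B l a = 1 ∧ B l b = 0 ∧ B l c = 0}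

/-- The pencil of a triangle `(c₁,c₂,c₃)` in `Γ`. -/
def pencil (B : S →ₗ[ℤ] S →ₗ[ℤ] ℤ) (Γ : Set S) (c₁ c₂ c₃ : S) : Set S :=
  {c₁, c₂, c₃} ∪ {l ∈ Γ | B l c₁ = 0 ∧ B l c₂ = 0 ∧ B l c₃ = 0}

end K3

namespace K3

/-- `X` is a *triangular set* for the adjacency relation "`⟨u,v⟩ = 1`": every connected
component of `X` is of type `A₁` (vertex), `A₂` (edge), `A₃` (path on three vertices) or
`Ã₂` (3-cycle).  For a simple graph this holds if and only if (1) no vertex has three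
distinct neighbours in `X`, and (2) there is no chain of four distinct vertices
`v₁ ~ v₂ ~ v₃ ~ v₄` in `X`; indeed, a connected graph of maximal degree ≤ 2 is a path or a
cycle, and condition (2) cuts these down to paths on ≤ 3 vertices and 3-cycles. -/
def IsTriangularSet {S : Type*} [AddCommGroup S] [Module ℤ S]
    (B : S →ₗ[ℤ] S →ₗ[ℤ] ℤ) (X : Set S) : Prop :=
  (∀ v ∈ X, ¬ ∃ u₁ ∈ X, ∃ u₂ ∈ X, ∃ u₃ ∈ X, u₁ ≠ u₂ ∧ u₁ ≠ u₃ ∧ u₂ ≠ u₃ ∧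
      B v u₁ = 1 ∧ B v u₂ = 1 ∧ B v u₃ = 1) ∧
  ¬ ∃ v₁ ∈ X, ∃ v₂ ∈ X, ∃ v₃ ∈ X, ∃ v₄ ∈ X,
      v₁ ≠ v₂ ∧ v₁ ≠ v₃ ∧ v₁ ≠ v₄ ∧ v₂ ≠ v₃ ∧ v₂ ≠ v₄ ∧ v₃ ≠ v₄ ∧
      B v₁ v₂ = 1 ∧ B v₂ v₃ = 1 ∧ B v₃ v₄ = 1

/-!
Two distinct lines `u, v` of `Γ` have `⟨u,v⟩ ≥ 0`: otherwise `u - v ⊥ h` has square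
`-4 - 2⟨u,v⟩`, so hyperbolicity forces `⟨u,v⟩ = -1` and `u - v` is a root separating `v` from `u`.

Now let `x ~ y ~ z` be a path of lines all meeting a line `a`, and let `t` be a fourth such line
meeting the path. Then `w = a + x + y + z - h` is orthogonal to `h`, has `w² = 2⟨x,z⟩ - 2` and
`⟨w,t⟩ > 0`. Hyperbolicity forces `⟨x,z⟩ = 0`, and then `w` is a root with `⟨w,x⟩ = -1`,
separating `t` from `x`. A vertex of `sec_i` with three neighbours, or a chain of four vertices
in `sec_i`, is such a configuration with `a = cᵢ`.
-/

section Lattice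

variable {S : Type*} [AddCommGroup S] [Module ℤ S] {B : S →ₗ[ℤ] S →ₗ[ℤ] ℤ} {h : S}

theorem NoSeparatingRoots.apply_nonneg_of_ne (hpol : IsPolarized B h) {Γ : Set S}
    (hΓ : Γ ⊆ root1 B h) (hsep : NoSeparatingRoots B h Γ) {u v : S} (hu : u ∈ Γ) (hv : v ∈ Γ)
    (hne : u ≠ v) : 0 ≤ B u v := by
  obtain ⟨huu, huh⟩ := hΓ hu
  obtain ⟨hvv, hvh⟩ := hΓ hv
  have hsymm := hpol.symm v u
  by_contra! hneg
  have hrh : B (u - v) h = 0 := by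
    simp only [map_sub, LinearMap.sub_apply]; omega
  have hrr : B (u - v) (u - v) = -4 - 2 * B u v := by
    simp only [map_sub, LinearMap.sub_apply]; omega
  have huv : B u v = -1 := by
    have := hpol.hyperbolic _ (sub_ne_zero.mpr hne) hrh
    omega
  refine hsep ⟨u - v, ⟨by omega, hrh⟩, v, hv, u, hu, ?_, ?_⟩ <;>
    simp only [map_sub, LinearMap.sub_apply] <;> omega

theorem IsPolarized.exists_root_separating (hpol : IsPolarized B h) {a x y z t : S}
    (ha : a ∈ root1 B h) (hx : x ∈ root1 B h) (hy : y ∈ root1 B h) (hz : z ∈ root1 B h)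
    (ht : t ∈ root1 B h) (hxa : B x a = 1) (hya : B y a = 1) (hza : B z a = 1)
    (hta : B t a = 1) (hxy : B x y = 1) (hyz : B y z = 1) (hxz : 0 ≤ B x z)
    (hxyzt : 0 < B x t + B y t + B z t) :
    ∃ r ∈ root0 B h, 0 < B r t ∧ B r x < 0 := by
  obtain ⟨haa, hah⟩ := ha
  obtain ⟨hxx, hxh⟩ := hx
  obtain ⟨hyy, hyh⟩ := hy
  obtain ⟨hzz, hzh⟩ := hz
  have hth := ht.2
  have hs := hpol.symm
  set w := a + x + y + z - h with hw
  have hwh : B w h = 0 := by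
    simp only [hw, map_add, map_sub, LinearMap.add_apply, LinearMap.sub_apply]
    linarith [hpol.deg]
  have hww : B w w = 2 * B x z - 2 := by
    simp only [hw, map_add, map_sub, LinearMap.add_apply, LinearMap.sub_apply]
    linarith [hpol.deg, hs a x, hs a y, hs a z, hs h a, hs h x, hs h y, hs h z, hs y x,
      hs z y, hs z x]
  have hwt : 0 < B w t := by
    simp only [hw, map_add, map_sub, LinearMap.add_apply, LinearMap.sub_apply]
    linarith [hs a t, hs x t, hs y t, hs z t, hs h t]
  have hwx : B w x = B x z - 1 := by
    simp only [hw, map_add, map_sub, LinearMap.add_apply, LinearMap.sub_apply]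
    linarith [hs a x, hs y x, hs z x, hs h x]
  have hxz0 : B x z = 0 := by
    have hw0 : w ≠ 0 := by
      rintro hw0
      simp [hw0] at hwt
    have := hpol.hyperbolic w hw0 hwh
    omega
  exact ⟨w, ⟨by omega, hwh⟩, hwt, by omega⟩

theorem isTriangularSet_of_forall_apply_eq_one (hpol : IsPolarized B h) {Γ : Set S}
    (hΓ : Γ ⊆ root1 B h) (hsep : NoSeparatingRoots B h Γ) {a : S} (ha : a ∈ root1 B h)
    {X : Set S} (hXΓ : X ⊆ Γ) (hXa : ∀ l ∈ X, B l a = 1) : IsTriangularSet B X := by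
  have hs := hpol.symm
  have nonneg {u v : S} (hu : u ∈ X) (hv : v ∈ X) (hne : u ≠ v) : 0 ≤ B u v :=
    hsep.apply_nonneg_of_ne hpol hΓ (hXΓ hu) (hXΓ hv) hne
  have separated {x y z t : S} (hx : x ∈ X) (hy : y ∈ X) (hz : z ∈ X) (ht : t ∈ X)
      (hxy : B x y = 1) (hyz : B y z = 1) (hxz : 0 ≤ B x z)
      (hxyzt : 0 < B x t + B y t + B z t) : False := by
    obtain ⟨r, hr, hrt, hrx⟩ := hpol.exists_root_separating ha (hΓ (hXΓ hx)) (hΓ (hXΓ hy))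
      (hΓ (hXΓ hz)) (hΓ (hXΓ ht)) (hXa x hx) (hXa y hy) (hXa z hz) (hXa t ht) hxy hyz hxz hxyzt
    exact hsep ⟨r, hr, t, hXΓ ht, x, hXΓ hx, hrt, hrx⟩
  constructor
  · rintro v hv ⟨u₁, hu₁, u₂, hu₂, u₃, hu₃, h₁₂, h₁₃, h₂₃, hv₁, hv₂, hv₃⟩
    refine separated hu₁ hv hu₂ hu₃ (by rw [hs, hv₁]) hv₂ (nonneg hu₁ hu₂ h₁₂) ?_
    linarith [nonneg hu₁ hu₃ h₁₃, nonneg hu₂ hu₃ h₂₃]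
  · rintro ⟨v₁, hv₁, v₂, hv₂, v₃, hv₃, v₄, hv₄, h₁₂, h₁₃, h₁₄, h₂₃, h₂₄, h₃₄, e₁₂, e₂₃, e₃₄⟩
    refine separated hv₁ hv₂ hv₃ hv₄ e₁₂ e₂₃ (nonneg hv₁ hv₃ h₁₃) ?_
    linarith [nonneg hv₁ hv₄ h₁₄, nonneg hv₂ hv₄ h₂₄]

end Lattice

theorem sec_is_triangular_set_general
    {S : Type*} [AddCommGroup S] [Module ℤ S]
    (B : S →ₗ[ℤ] S →ₗ[ℤ] ℤ) (h : S)
    (hpol : IsPolarized B h)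
    (Γ : Set S) (hΓ : Γ ⊆ root1 B h)
    (hsep : NoSeparatingRoots B h Γ)
    (c₁ c₂ c₃ : S) (htri : IsTriangle B Γ c₁ c₂ c₃) :
    IsTriangularSet B (sec B Γ c₁ c₂ c₃) ∧
    IsTriangularSet B (sec B Γ c₂ c₁ c₃) ∧
    IsTriangularSet B (sec B Γ c₃ c₁ c₂) := by
  have sec_triangular {a b c : S} (ha : a ∈ Γ) : IsTriangularSet B (sec B Γ a b c) :=
    isTriangularSet_of_forall_apply_eq_one hpol hΓ hsep (hΓ ha) (fun _ hl => hl.1)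
      (fun _ hl => hl.2.1)
  exact ⟨sec_triangular htri.1, sec_triangular htri.2.1, sec_triangular htri.2.2.1⟩

/-- Lemma 3.2. In an admissible 4-polarized lattice, for a set of lines
`Γ` with no separating roots and a triangle `c₁,c₂,c₃ ∈ Γ`, each set of simple sections
`sec_i` is a triangular set: all its connected components are single vertices, single
edges, paths on three vertices, or 3-cycles. -/
theorem sec_is_triangular_set
    {S : Type*} [AddCommGroup S] [Module ℤ S]
    (B : S →ₗ[ℤ] S →ₗ[ℤ] ℤ) (h : S)
    (hpol : IsPolarized B h) (hadm : IsAdmissible B h)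
    (Γ : Set S) (hΓ : Γ ⊆ root1 B h)
    (hsep : NoSeparatingRoots B h Γ)
    (c₁ c₂ c₃ : S) (htri : IsTriangle B Γ c₁ c₂ c₃) :
    IsTriangularSet B (sec B Γ c₁ c₂ c₃) ∧
    IsTriangularSet B (sec B Γ c₂ c₁ c₃) ∧
    IsTriangularSet B (sec B Γ c₃ c₁ c₂) :=
  sec_is_triangular_set_general B h hpol Γ hΓ hsep c₁ c₂ c₃ htri

end K3
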